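/- arXiv:1101.3677 — 6 statements merged into one kernel-verified Lean document; each statement's English description precedes it below -/
import Mathlib

section
/- For any two increasing functions f, g : [0,∞) → [0,∞) with f(x) → ∞ and g(x) → ∞ as x → ∞, there exist δ > 0, x₁ ≥ 0, and a continuous, increasing, concave function v : [0,∞) → [0,∞) with v(0) = 0 and v(x) → ∞ as x → ∞, such that v(f(x)) ≥ δ·v(g(x)) for every x ≥ x₁; moreover v can be chosen so that x/v(x) → ∞ as x → ∞. -/
/-!
Choose `t₀ < t₁ < ⋯ → ∞` and `c₀ > 0` with `c (k + 1) ≥ 2 c k`, `g (t k) ≤ c k` and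
`f ≥ c k` on `[t (k + 1), ∞)`, and take `v x = ∑ₖ min x (c k) / c k`, a sum of concave
ramps. Doubling gives `n + 1 ≤ v (c n) ≤ n + 2`, so for `x ∈ [t (k + 1), t (k + 2))` we get
`v (f x) ≥ k + 1` and `v (g x) ≤ v (c (k + 2)) ≤ k + 4`, whence `δ = 1/4` works. Since every
ramp is bounded, `v x / x → 0` by dominated convergence.
-/

open Set Filter Topology

theorem ConcaveOn.tsum {ι E : Type*} [AddCommGroup E] [Module ℝ E] {s : Set E}
    (hs : Convex ℝ s) {φ : ι → E → ℝ} (hφ : ∀ i, ConcaveOn ℝ s (φ i))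
    (hsum : ∀ x ∈ s, Summable fun i => φ i x) : ConcaveOn ℝ s fun x => ∑' i, φ i x := by
  refine ⟨hs, fun x hx y hy a b ha hb hab => ?_⟩
  simp only [smul_eq_mul]
  rw [← tsum_mul_left, ← tsum_mul_left,
    ← ((hsum x hx).mul_left a).tsum_add ((hsum y hy).mul_left b)]
  exact ((hsum x hx).mul_left a |>.add <| (hsum y hy).mul_left b).tsum_le_tsum
    (fun i => (hφ i).2 hx hy ha hb hab) (hsum _ (hs hx hy ha hb hab))

noncomputable def rampSum (c : ℕ → ℝ) (x : ℝ) : ℝ := ∑' k, min x (c k) / c k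

section Ramp

variable {c : ℝ}

lemma concaveOn_min_div (hc : 0 ≤ c) : ConcaveOn ℝ univ fun x : ℝ => min x c / c := by
  have := ((concaveOn_id convex_univ).inf (concaveOn_const c convex_univ)).smul (inv_nonneg.2 hc)
  simpa [div_eq_inv_mul] using this

lemma abs_min_div_le (hc : 0 < c) (x : ℝ) : |min x c / c| ≤ |x| * c⁻¹ := by
  rw [abs_div, abs_of_pos hc, div_eq_mul_inv]
  gcongr ?_ * _
  rcases le_total x c with h | h
  · rw [min_eq_left h]
  · rw [min_eq_right h, abs_of_pos hc]; exact h.trans (le_abs_self x)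

lemma min_div_le_one (hc : 0 < c) (x : ℝ) : min x c / c ≤ 1 :=
  div_le_one_of_le₀ (min_le_right x c) hc.le

lemma min_div_le_add (hc : 0 < c) (x y : ℝ) :
    min x c / c ≤ min y c / c + |x - y| * c⁻¹ := by
  have h := abs_min_sub_min_le_max x c y c
  rw [sub_self, abs_zero, max_eq_left (abs_nonneg _)] at h
  rw [div_eq_mul_inv, div_eq_mul_inv, ← add_mul]
  gcongr
  linarith [le_abs_self (min x c - min y c)]

end Ramp

section RampSum

variable {c : ℕ → ℝ} (hc : ∀ k, 0 < c k) (hs : Summable fun k => (c k)⁻¹)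
include hc hs

lemma summable_min_div (x : ℝ) : Summable fun k => min x (c k) / c k :=
  (hs.mul_left |x|).of_norm_bounded fun k => abs_min_div_le (hc k) x

lemma rampSum_le_add (x y : ℝ) :
    rampSum c x ≤ rampSum c y + (∑' k, (c k)⁻¹) * |x - y| := by
  rw [rampSum, rampSum, mul_comm, ← tsum_mul_left,
    ← (summable_min_div hc hs y).tsum_add (hs.mul_left _)]
  exact (summable_min_div hc hs x).tsum_le_tsum (fun k => min_div_le_add (hc k) x y)
    ((summable_min_div hc hs y).add (hs.mul_left _))

lemma lipschitzWith_rampSum : LipschitzWith (∑' k, (c k)⁻¹).toNNReal (rampSum c) :=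
  LipschitzWith.of_le_add_mul' _ fun x y => by
    simpa only [Real.dist_eq] using rampSum_le_add hc hs x y

omit hs in
lemma rampSum_zero : rampSum c 0 = 0 := by
  simp [rampSum, fun k => min_eq_left (hc k).le]

lemma monotone_rampSum : Monotone (rampSum c) := fun x y hxy =>
  (summable_min_div hc hs x).tsum_le_tsum
    (fun k => div_le_div_of_nonneg_right (min_le_min_right _ hxy) (hc k).le)
    (summable_min_div hc hs y)

lemma concaveOn_rampSum : ConcaveOn ℝ univ (rampSum c) :=
  ConcaveOn.tsum convex_univ (fun k => concaveOn_min_div (hc k).le)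
    fun x _ => summable_min_div hc hs x

lemma tendsto_atTop_of_summable_inv : Tendsto c atTop atTop := by
  have h : Tendsto (fun k => (c k)⁻¹) atTop (𝓝[>] 0) :=
    tendsto_nhdsWithin_iff.2
      ⟨hs.tendsto_atTop_zero, Eventually.of_forall fun k => inv_pos.2 (hc k)⟩
  simpa only [Pi.inv_def, inv_inv] using h.inv_tendsto_nhdsGT_zero

lemma strictMonoOn_rampSum : StrictMonoOn (rampSum c) (Ici 0) := by
  intro x _ y _ hxy
  obtain ⟨n, hn⟩ := ((tendsto_atTop_of_summable_inv hc hs).eventually_gt_atTop x).exists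
  refine (summable_min_div hc hs x).tsum_lt_tsum (i := n)
    (fun k => div_le_div_of_nonneg_right (min_le_min_right _ hxy.le) (hc k).le) ?_
    (summable_min_div hc hs y)
  rw [min_eq_left hn.le]
  exact div_lt_div_of_pos_right (lt_min hxy hn) (hc n)

lemma rampSum_nonneg {x : ℝ} (hx : 0 ≤ x) : 0 ≤ rampSum c x :=
  rampSum_zero hc ▸ monotone_rampSum hc hs hx

lemma natCast_add_one_le_rampSum {n : ℕ} {x : ℝ} (hx : ∀ k ≤ n, c k ≤ x) :
    (n : ℝ) + 1 ≤ rampSum c x := by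
  have hx0 : 0 ≤ x := (hc 0).le.trans (hx 0 n.zero_le)
  calc (n : ℝ) + 1 = ∑ k ∈ Finset.range (n + 1), min x (c k) / c k := by
        rw [Finset.sum_congr rfl fun k hk => by
          rw [min_eq_right (hx k (Nat.lt_succ_iff.1 (Finset.mem_range.1 hk))),
            div_self (hc k).ne']]
        simp
    _ ≤ rampSum c x := (summable_min_div hc hs x).sum_le_tsum _
        fun k _ => div_nonneg (le_min hx0 (hc k).le) (hc k).le

lemma tendsto_rampSum_atTop : Tendsto (rampSum c) atTop atTop := by
  refine tendsto_atTop.2 fun b => ?_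
  obtain ⟨n, hn⟩ := exists_nat_ge b
  filter_upwards [(eventually_all_finite (finite_Iic n)).2 fun k _ => eventually_ge_atTop (c k)]
    with x hx
  linarith [natCast_add_one_le_rampSum hc hs fun k hk => hx k hk]

lemma tendsto_rampSum_div_atTop : Tendsto (fun x => rampSum c x / x) atTop (𝓝 0) := by
  have hterm (k : ℕ) : Tendsto (fun x => min x (c k) / c k / x) atTop (𝓝 0) := by
    refine tendsto_inv_atTop_zero.congr' ?_
    filter_upwards [eventually_ge_atTop (c k)] with x hx
    rw [min_eq_right hx, div_self (hc k).ne', one_div]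
  have hbound : ∀ᶠ x in atTop, ∀ k, ‖min x (c k) / c k / x‖ ≤ (c k)⁻¹ := by
    filter_upwards [eventually_gt_atTop 0] with x hx k
    rw [norm_div, Real.norm_eq_abs, Real.norm_eq_abs, abs_of_pos hx, div_le_iff₀ hx]
    simpa [abs_of_pos hx, mul_comm] using abs_min_div_le (hc k) x
  simpa [rampSum, tsum_div_const] using tendsto_tsum_of_dominated_convergence hs hterm hbound

lemma tendsto_div_rampSum_atTop : Tendsto (fun x => x / rampSum c x) atTop atTop := by
  have hpos : ∀ᶠ x in atTop, 0 < rampSum c x / x := by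
    filter_upwards [eventually_gt_atTop 0] with x hx
    exact div_pos (rampSum_zero hc ▸ strictMonoOn_rampSum hc hs self_mem_Ici hx.le hx) hx
  simpa only [Pi.inv_def, inv_div] using
    (tendsto_nhdsWithin_iff.2 ⟨tendsto_rampSum_div_atTop hc hs, hpos⟩).inv_tendsto_nhdsGT_zero

end RampSum

section Doubling

variable {c : ℕ → ℝ} (hc0 : 0 < c 0) (hcd : ∀ k, 2 * c k ≤ c (k + 1))
include hcd

omit hc0 in
lemma two_pow_mul_le_of_two_mul_le (n k : ℕ) : 2 ^ k * c n ≤ c (n + k) := by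
  induction k with
  | zero => simp
  | succ k ih => rw [pow_succ, ← add_assoc]; linarith [hcd (n + k)]

include hc0

lemma pos_of_two_mul_le (k : ℕ) : 0 < c k := by
  have := two_pow_mul_le_of_two_mul_le hcd 0 k
  rw [zero_add] at this
  exact (mul_pos (by positivity) hc0).trans_le this

lemma monotone_of_two_mul_le : Monotone c :=
  monotone_nat_of_le_succ fun k => by linarith [hcd k, pos_of_two_mul_le hc0 hcd k]

lemma div_le_half_pow_of_two_mul_le (n k : ℕ) : c n / c (n + k) ≤ (1 / 2) ^ k := by
  rw [div_le_iff₀ (pos_of_two_mul_le hc0 hcd _), one_div, inv_pow, inv_mul_eq_div,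
    le_div_iff₀ (by positivity), mul_comm]
  exact two_pow_mul_le_of_two_mul_le hcd n k

lemma summable_inv_of_two_mul_le : Summable fun k => (c k)⁻¹ := by
  refine (summable_geometric_two.mul_left (c 0)⁻¹).of_nonneg_of_le
    (fun k => (inv_pos.2 (pos_of_two_mul_le hc0 hcd k)).le) fun k => ?_
  calc (c k)⁻¹ = (c 0)⁻¹ * (c 0 / c (0 + k)) := by rw [zero_add]; field_simp
    _ ≤ (c 0)⁻¹ * (1 / 2) ^ k := by
      gcongr
      exact div_le_half_pow_of_two_mul_le hc0 hcd 0 k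

lemma rampSum_apply_le_of_two_mul_le (n : ℕ) : rampSum c (c n) ≤ n + 2 := by
  have hc := pos_of_two_mul_le hc0 hcd
  have hsum := summable_min_div hc (summable_inv_of_two_mul_le hc0 hcd) (c n)
  have htail (k : ℕ) : min (c n) (c (k + n)) / c (k + n) ≤ (1 / 2) ^ k := by
    rw [add_comm]
    exact (div_le_div_of_nonneg_right (min_le_left _ _) (hc _).le).trans
      (div_le_half_pow_of_two_mul_le hc0 hcd n k)
  rw [rampSum, ← hsum.sum_add_tsum_nat_add n, ← tsum_geometric_two]
  refine add_le_add ?_ ?_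
  · exact (Finset.sum_le_sum fun k _ => min_div_le_one (hc k) (c n)).trans (by simp)
  · exact Summable.tsum_le_tsum htail ((summable_nat_add_iff n).2 hsum) summable_geometric_two

end Doubling

lemma exists_le_lt_succ_of_tendsto {α : Type*} [LinearOrder α] [NoMaxOrder α] {t : ℕ → α}
    (ht : Tendsto t atTop atTop) {x : α} (hx : t 0 ≤ x) :
    ∃ k, t k ≤ x ∧ x < t (k + 1) := by
  classical
  have hex : ∃ m, x < t m := (ht.eventually_gt_atTop x).exists
  have hfind : Nat.find hex ≠ 0 := fun h => (h ▸ Nat.find_spec hex).not_ge hx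
  obtain ⟨k, hk⟩ := Nat.exists_eq_add_one_of_ne_zero hfind
  exact ⟨k, not_lt.1 (Nat.find_min hex (by omega)), hk ▸ Nat.find_spec hex⟩

lemma exists_interleaving_seq {f : ℝ → ℝ} (g : ℝ → ℝ) (hf : Tendsto f atTop atTop) :
    ∃ t c : ℕ → ℝ, (∀ k : ℕ, (k : ℝ) ≤ t k) ∧ 0 < c 0 ∧
      (∀ k, 2 * c k ≤ c (k + 1)) ∧ (∀ k, g (t k) ≤ c k) ∧
      ∀ k x, t (k + 1) ≤ x → c k ≤ f x := by
  choose N hN using fun y => eventually_atTop.1 (hf.eventually_ge_atTop y)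
  let step : ℝ × ℝ → ℝ × ℝ := fun p =>
    (max (p.1 + 1) (N p.2), max (2 * p.2) (g (max (p.1 + 1) (N p.2))))
  let p : ℕ → ℝ × ℝ := fun k => step^[k] (0, max 1 (g 0))
  have hp (k : ℕ) : p (k + 1) = step (p k) := Function.iterate_succ_apply' _ _ _
  let t k := (p k).1
  let c k := (p k).2
  have ht (k : ℕ) : t (k + 1) = max (t k + 1) (N (c k)) := congrArg Prod.fst (hp k)
  have hc (k : ℕ) : c (k + 1) = max (2 * c k) (g (t (k + 1))) := by
    rw [ht]; exact congrArg Prod.snd (hp k)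
  refine ⟨t, c, fun k => ?_, lt_max_of_lt_left one_pos,
    fun k => hc k ▸ le_max_left _ _, fun k => ?_, fun k x hx => hN _ _ ?_⟩
  · induction k with
    | zero => simp [t, p]
    | succ k ih => rw [ht]; push_cast; linarith [le_max_left (t k + 1) (N (c k))]
  · cases k with
    | zero => exact le_max_right _ _
    | succ k => rw [hc]; exact le_max_right _ _
  · exact (le_max_right _ _).trans (ht k ▸ hx)

theorem stmt0_general (f g : ℝ → ℝ) (hgmono : MonotoneOn g (Ici 0))
    (hftop : Tendsto f atTop atTop) :
    ∃ δ > (0:ℝ), ∃ x₁ ≥ (0:ℝ), ∃ v : ℝ → ℝ,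
      ContinuousOn v (Ici 0) ∧ StrictMonoOn v (Ici 0) ∧ ConcaveOn ℝ (Ici 0) v ∧
      MapsTo v (Ici 0) (Ici 0) ∧ v 0 = 0 ∧ Tendsto v atTop atTop ∧
      (∀ x ≥ x₁, δ * v (g x) ≤ v (f x)) ∧
      Tendsto (fun x => x / v x) atTop atTop := by
  obtain ⟨t, c, ht, hc0, hcd, hgc, hcf⟩ := exists_interleaving_seq g hftop
  have hc := pos_of_two_mul_le hc0 hcd
  have hs := summable_inv_of_two_mul_le hc0 hcd
  have ht_top : Tendsto t atTop atTop := tendsto_atTop_mono ht tendsto_natCast_atTop_atTop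
  refine ⟨1 / 4, by norm_num, t 1, (Nat.cast_nonneg 1).trans (ht 1), rampSum c,
    (lipschitzWith_rampSum hc hs).continuous.continuousOn, strictMonoOn_rampSum hc hs,
    (concaveOn_rampSum hc hs).subset (subset_univ _) (convex_Ici 0),
    fun x hx => rampSum_nonneg hc hs hx, rampSum_zero hc, tendsto_rampSum_atTop hc hs,
    fun x hx => ?_, tendsto_div_rampSum_atTop hc hs⟩
  obtain ⟨k, hkx, hxk⟩ :=
    exists_le_lt_succ_of_tendsto ((tendsto_add_atTop_iff_nat 1).2 ht_top) hx
  have ht0 (n : ℕ) : 0 ≤ t n := (Nat.cast_nonneg n).trans (ht n)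
  have hf_lower : (k : ℝ) + 1 ≤ rampSum c (f x) :=
    (natCast_add_one_le_rampSum hc hs fun j hj => monotone_of_two_mul_le hc0 hcd hj).trans
      (monotone_rampSum hc hs (hcf k x hkx))
  have hg_upper : rampSum c (g x) ≤ ((k + 2 : ℕ) : ℝ) + 2 :=
    (monotone_rampSum hc hs ((hgmono (ht0 _ |>.trans hkx) (ht0 _) hxk.le).trans (hgc _))).trans
      (rampSum_apply_le_of_two_mul_le hc0 hcd _)
  push_cast at hg_upper
  linarith

/-- For any two increasing functions `f, g : [0,∞) → [0,∞)` tending to `+∞`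
at `+∞`, there exist `δ > 0`, `x₁ ≥ 0` and a continuous, increasing, concave function
`v : [0,∞) → [0,∞)` with `v 0 = 0` and `v → ∞` at `∞`, such that `v (f x) ≥ δ * v (g x)`
for every `x ≥ x₁`; moreover `v` may be chosen with `x / v x → ∞` as `x → ∞`. -/
theorem stmt0 (f g : ℝ → ℝ)
    (hfmono : MonotoneOn f (Ici 0)) (hgmono : MonotoneOn g (Ici 0))
    (hfmaps : MapsTo f (Ici 0) (Ici 0)) (hgmaps : MapsTo g (Ici 0) (Ici 0))
    (hftop : Tendsto f atTop atTop) (hgtop : Tendsto g atTop atTop) :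
    ∃ δ > (0:ℝ), ∃ x₁ ≥ (0:ℝ), ∃ v : ℝ → ℝ,
      ContinuousOn v (Ici 0) ∧ StrictMonoOn v (Ici 0) ∧ ConcaveOn ℝ (Ici 0) v ∧
      MapsTo v (Ici 0) (Ici 0) ∧ v 0 = 0 ∧ Tendsto v atTop atTop ∧
      (∀ x ≥ x₁, δ * v (g x) ≤ v (f x)) ∧
      Tendsto (fun x => x / v x) atTop atTop :=
  stmt0_general f g hgmono hftop
end

section
/- Let N ≥ 1 be an integer and let m : (0,1) → [0,∞) be nondecreasing. If for every Orlicz function ψ and every A > 0 there exists h₀ ∈ (0,1) such that m(h) ≤ 1/ψ(A·ψ⁻¹(1/h^N)) for all 0 < h < h₀, then there exists h₁ ∈ (0,1) such that m(h) = 0 for all 0 < h ≤ h₁. -/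
open Set Filter

/-- An Orlicz function: a strictly convex function `psi : [0,oo) -> [0,oo)` with `psi 0 = 0`,
`psi` continuous at `0`, and `psi x / x -> oo` as `x -> oo`. -/
def OrliczFunction (ψ : ℝ → ℝ) : Prop :=
  StrictConvexOn ℝ (Ici 0) ψ ∧ (∀ x ∈ Ici (0:ℝ), 0 ≤ ψ x) ∧ ψ 0 = 0 ∧
    ContinuousWithinAt ψ (Ici 0) 0 ∧ Tendsto (fun x => ψ x / x) atTop atTop

/-- `ψinv` is the inverse of the Orlicz function `ψ`, viewed as an increasing bijection
of `[0,oo)` onto itself. -/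
def OrliczInverse (ψ ψinv : ℝ → ℝ) : Prop :=
  (∀ x, 0 ≤ x → ψinv (ψ x) = x) ∧ (∀ y, 0 ≤ y → ψ (ψinv y) = y) ∧ (∀ y, 0 ≤ y → 0 ≤ ψinv y)

/-- The nabla_0-condition. -/
def Nabla0 (ψ : ℝ → ℝ) : Prop :=
  ∀ B > (1:ℝ), ∃ C ≥ (1:ℝ), ∃ x₀ > (0:ℝ), ∀ x y : ℝ, x₀ ≤ x → x ≤ y →
    ψ (B * x) / ψ x ≤ ψ (C * B * y) / ψ y

/-- The uniform nabla_0-condition. -/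
def UniformNabla0 (ψ : ℝ → ℝ) : Prop :=
  ∃ C ≥ (1:ℝ), ∀ B > (1:ℝ), ∃ x₀ > (0:ℝ), ∀ x y : ℝ, x₀ ≤ x → x ≤ y →
    ψ (B * x) / ψ x ≤ ψ (C * B * y) / ψ y

/-- The nabla_2-condition. -/
def Nabla2 (ψ : ℝ → ℝ) : Prop :=
  ∃ β > (1:ℝ), ∃ x₀ > (0:ℝ), ∀ x ≥ x₀, 2 * β * ψ x ≤ ψ (β * x)

/-- The Delta_2-condition. -/
def Delta2 (ψ : ℝ → ℝ) : Prop :=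
  ∃ K > (1:ℝ), ∃ x₀ > (0:ℝ), ∀ x ≥ x₀, ψ (2 * x) ≤ K * ψ x

/-- The Delta^2-condition. -/
def DeltaSquare (ψ : ℝ → ℝ) : Prop :=
  ∃ C > (0:ℝ), ∃ x₀ > (0:ℝ), ∀ x ≥ x₀, (ψ x) ^ 2 ≤ ψ (C * x)

/-!
If `m` does not vanish near `0`, monotonicity makes it positive on `(0,1)`. Take
`ψ x = x ^ 2 + L x` with `L` convex and piecewise linear, its slopes chosen recursively so that
`ψ (k + 1) > 1 / m (ψ k ^ (-1/N))` for every natural `k`. At `h = ψ K ^ (-1/N)` we have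
`ψ⁻¹ (1 / h ^ N) = K`, so the hypothesis with `A = 2` gives, for large `K`,
`m h ≤ 1 / ψ (2 K) ≤ 1 / ψ (K + 1) < m h`.
-/

namespace OrliczFunction

variable {ψ : ℝ → ℝ}

theorem pos (hψ : OrliczFunction ψ) {x : ℝ} (hx : 0 < x) : 0 < ψ x := by
  obtain ⟨hconv, hnonneg, hzero, -, -⟩ := hψ
  have hmid := hconv.2 (mem_Ici.2 le_rfl) (mem_Ici.2 hx.le) hx.ne (by norm_num : (0:ℝ) < 1 / 2)
    (by norm_num : (0:ℝ) < 1 / 2) (by norm_num)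
  have hhalf := hnonneg ((1 / 2 : ℝ) • (0:ℝ) + (1 / 2 : ℝ) • x) (mem_Ici.2 (by positivity))
  simp only [smul_eq_mul, hzero] at hmid hhalf
  linarith

theorem strictMonoOn (hψ : OrliczFunction ψ) : StrictMonoOn ψ (Ici 0) := by
  intro x hx y hy hxy
  rcases (mem_Ici.1 hx).eq_or_lt with rfl | hx0
  · rw [hψ.2.2.1]
    exact hψ.pos hxy
  have hy0 : 0 < y := hx0.trans hxy
  have hcombo := hψ.1.2 (mem_Ici.2 le_rfl) hy hy0.ne (sub_pos.2 ((div_lt_one hy0).2 hxy))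
    (div_pos hx0 hy0) (by ring)
  have hx_eq : (1 - x / y) • (0:ℝ) + (x / y) • y = x := by
    simp only [smul_eq_mul]; field_simp; ring
  rw [hx_eq, smul_eq_mul, smul_eq_mul, hψ.2.2.1, mul_zero, zero_add] at hcombo
  calc ψ x < x / y * ψ y := hcombo
    _ ≤ ψ y := mul_le_of_le_one_left (hψ.2.1 y hy) ((div_le_one hy0).2 hxy.le)

theorem continuousOn (hψ : OrliczFunction ψ) : ContinuousOn ψ (Ici 0) :=
  hψ.1.convexOn.continuousOn_Ici hψ.2.2.2.1

theorem tendsto_atTop (hψ : OrliczFunction ψ) : Tendsto ψ atTop atTop := by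
  refine tendsto_atTop_mono' atTop ?_ tendsto_id
  filter_upwards [hψ.2.2.2.2.eventually_ge_atTop 1, eventually_gt_atTop 0] with x hx hx0
  simpa using (le_div_iff₀ hx0).1 hx

theorem surjOn (hψ : OrliczFunction ψ) : SurjOn ψ (Ici 0) (Ici 0) := by
  intro y hy
  obtain ⟨b, hb0, hyb⟩ :=
    ((eventually_ge_atTop 0).and (hψ.tendsto_atTop.eventually_ge_atTop y)).exists
  obtain ⟨x, hx, rfl⟩ := intermediate_value_Icc hb0 (hψ.continuousOn.mono Icc_subset_Ici_self)
    ⟨hψ.2.2.1.symm ▸ hy, hyb⟩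
  exact ⟨x, hx.1, rfl⟩

theorem orliczInverse_invFunOn (hψ : OrliczFunction ψ) :
    OrliczInverse ψ (Function.invFunOn ψ (Ici 0)) :=
  ⟨fun _ hx => hψ.strictMonoOn.injOn.leftInvOn_invFunOn hx,
    fun _ hy => Function.invFunOn_eq (hψ.surjOn hy),
    fun _ hy => Function.invFunOn_mem (hψ.surjOn hy)⟩

end OrliczFunction

theorem orliczFunction_sq_add {g : ℝ → ℝ} (hconv : ConvexOn ℝ (Ici 0) g)
    (hcont : ContinuousWithinAt g (Ici 0) 0) (hnonneg : ∀ x ∈ Ici (0:ℝ), 0 ≤ g x)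
    (hzero : g 0 = 0) :
    OrliczFunction fun x => x ^ 2 + g x := by
  refine ⟨(strictConvexOn_pow le_rfl).add_convexOn hconv,
    fun x hx => add_nonneg (sq_nonneg x) (hnonneg x hx), by simp [hzero],
    ((continuous_pow 2).continuousWithinAt).add hcont, ?_⟩
  refine tendsto_atTop_mono' atTop ?_ tendsto_id
  filter_upwards [eventually_gt_atTop 0] with x hx
  rw [id, le_div_iff₀ hx]
  nlinarith [hnonneg x hx.le]

/-- The piecewise linear function with kinks at the naturals, whose slope jumps by `c j` at `j`. -/
noncomputable def hingeSum (c : ℕ → ℝ) (x : ℝ) : ℝ :=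
  ∑ j ∈ Finset.range ⌈x⌉₊, c j * (x - j)

section hingeSum

variable {c : ℕ → ℝ}

theorem hingeSum_eqOn (M : ℕ) :
    EqOn (hingeSum c) (fun x => ∑ j ∈ Finset.range M, c j * max (x - j) 0) (Iic M) := by
  intro x hx
  have hlt : ∀ j ∈ Finset.range ⌈x⌉₊, c j * (x - j) = c j * max (x - j) 0 := fun j hj => by
    rw [max_eq_left (sub_nonneg.2 (Nat.lt_ceil.1 (Finset.mem_range.1 hj)).le)]
  refine (Finset.sum_congr rfl hlt).trans <| Finset.sum_subset
    (Finset.range_subset_range.2 (Nat.ceil_le.2 hx)) fun j _ hj => ?_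
  have hxj : x ≤ j := Nat.ceil_le.1 (not_lt.1 (Finset.mem_range.not.1 hj))
  rw [max_eq_right (sub_nonpos.2 hxj), mul_zero]

theorem hingeSum_natCast (k : ℕ) : hingeSum c k = ∑ j ∈ Finset.range k, c j * (k - j) := by
  simp [hingeSum]

theorem hingeSum_zero : hingeSum c 0 = 0 := by
  simp [hingeSum]

theorem continuous_hingeSum : Continuous (hingeSum c) := by
  refine continuous_iff_continuousAt.2 fun x => ?_
  have hcont : Continuous fun z : ℝ => ∑ j ∈ Finset.range (⌈x⌉₊ + 1), c j * max (z - j) 0 := by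
    fun_prop
  refine hcont.continuousAt.congr (Filter.EventuallyEq.symm ?_)
  refine Filter.eventuallyEq_of_mem (Iic_mem_nhds ?_) (hingeSum_eqOn _)
  exact (Nat.le_ceil x).trans_lt (by exact_mod_cast Nat.lt_succ_self _)

theorem convexOn_sum_hinge (hc : ∀ j, 0 ≤ c j) (M : ℕ) :
    ConvexOn ℝ univ fun x : ℝ => ∑ j ∈ Finset.range M, c j * max (x - j) 0 := by
  induction M with
  | zero => simpa using convexOn_const (0:ℝ) convex_univ
  | succ M ih =>
    simp_rw [Finset.sum_range_succ]
    have hinge : ConvexOn ℝ univ fun x : ℝ => max (x - M) 0 :=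
      ((convexOn_id convex_univ).sub (concaveOn_const _ convex_univ)).sup
        (convexOn_const 0 convex_univ)
    exact ih.add (hinge.smul (hc M))

theorem convexOn_hingeSum (hc : ∀ j, 0 ≤ c j) : ConvexOn ℝ univ (hingeSum c) := by
  have hM (M : ℕ) : ConvexOn ℝ (Iic (M:ℝ)) (hingeSum c) :=
    ((convexOn_sum_hinge hc M).subset (subset_univ _) (convex_Iic _)).congr (hingeSum_eqOn M).symm
  refine ⟨convex_univ, fun x _ y _ a b ha hb hab => ?_⟩
  obtain ⟨M, hM'⟩ := exists_nat_ge (max x y)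
  exact (hM M).2 (le_of_max_le_left hM') (le_of_max_le_right hM') ha hb hab

theorem hingeSum_nonneg (hc : ∀ j, 0 ≤ c j) (x : ℝ) : 0 ≤ hingeSum c x :=
  Finset.sum_nonneg fun j hj =>
    mul_nonneg (hc j) (sub_nonneg.2 (Nat.lt_ceil.1 (Finset.mem_range.1 hj)).le)

theorem le_hingeSum_natCast_add_one (hc : ∀ j, 0 ≤ c j) (k : ℕ) : c k ≤ hingeSum c (k + 1) :=
  calc c k = c k * (((k + 1 : ℕ) : ℝ) - k) := by push_cast; ring
    _ ≤ ∑ j ∈ Finset.range (k + 1), c j * (((k + 1 : ℕ) : ℝ) - j) :=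
      Finset.single_le_sum (f := fun j => c j * (((k + 1 : ℕ) : ℝ) - j))
        (fun j hj => mul_nonneg (hc j)
          (sub_nonneg.2 (by exact_mod_cast (Finset.mem_range.1 hj).le)))
        (Finset.self_mem_range_succ k)
    _ = hingeSum c (k + 1) := by rw [← hingeSum_natCast]; push_cast; rfl

end hingeSum

/-- The argument of `f` is `ψ k` for `ψ x = x ^ 2 + hingeSum (orliczSlope f) x`, spelled out so
that only the earlier slopes occur in it. -/
noncomputable def orliczSlope (f : ℝ → ℝ) (k : ℕ) : ℝ :=
  max (f (k ^ 2 + ∑ j : Fin k, orliczSlope f j * (k - j))) 0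

theorem orliczSlope_nonneg (f : ℝ → ℝ) (k : ℕ) : 0 ≤ orliczSlope f k := by
  rw [orliczSlope]
  exact le_max_right _ _

theorem le_orliczSlope (f : ℝ → ℝ) (k : ℕ) :
    f (k ^ 2 + hingeSum (orliczSlope f) k) ≤ orliczSlope f k := by
  rw [hingeSum_natCast, ← Fin.sum_univ_eq_sum_range (fun j => orliczSlope f j * (k - j)),
    orliczSlope]
  exact le_max_left _ _

theorem exists_orliczFunction_forall_lt (f : ℝ → ℝ) :
    ∃ ψ, OrliczFunction ψ ∧ ∀ k : ℕ, f (ψ k) < ψ (k + 1) := by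
  have hc := orliczSlope_nonneg f
  refine ⟨fun x => x ^ 2 + hingeSum (orliczSlope f) x,
    orliczFunction_sq_add ((convexOn_hingeSum hc).subset (subset_univ _) (convex_Ici 0))
      continuous_hingeSum.continuousWithinAt (fun x _ => hingeSum_nonneg hc x) hingeSum_zero,
    fun k => ?_⟩
  calc f (k ^ 2 + hingeSum (orliczSlope f) k) ≤ orliczSlope f k := le_orliczSlope f k
    _ ≤ hingeSum (orliczSlope f) (k + 1) := le_hingeSum_natCast_add_one hc k
    _ < (k + 1) ^ 2 + hingeSum (orliczSlope f) (k + 1) :=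
      lt_add_of_pos_left _ (by positivity)

/-- if `m : (0,1) → [0,∞)` is nondecreasing and for every Orlicz function `ψ`
and every `A > 0` one has `m h ≤ 1/ψ(A·ψ⁻¹(1/h^N))` for all small `h`, then `m` vanishes
near `0`. -/
theorem stmt1 (N : ℕ) (hN : 1 ≤ N) (m : ℝ → ℝ)
    (hm0 : ∀ h ∈ Ioo (0:ℝ) 1, 0 ≤ m h) (hmono : MonotoneOn m (Ioo (0:ℝ) 1))
    (hyp : ∀ ψ ψinv : ℝ → ℝ, OrliczFunction ψ → OrliczInverse ψ ψinv → ∀ A > (0:ℝ),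
      ∃ h₀ ∈ Ioo (0:ℝ) 1, ∀ h : ℝ, 0 < h → h < h₀ →
        m h ≤ 1 / ψ (A * ψinv (1 / h ^ N))) :
    ∃ h₁ ∈ Ioo (0:ℝ) 1, ∀ h : ℝ, 0 < h → h ≤ h₁ → m h = 0 := by
  by_contra hcon
  push Not at hcon
  have hpos : ∀ h ∈ Ioo (0:ℝ) 1, 0 < m h := fun h hh => by
    obtain ⟨h', h'0, h'h, hne⟩ := hcon h hh
    have hh' : h' ∈ Ioo (0:ℝ) 1 := ⟨h'0, h'h.trans_lt hh.2⟩
    exact ((hm0 h' hh').lt_of_ne' hne).trans_le (hmono hh' hh h'h)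
  obtain ⟨ψ, hψ, hstep⟩ := exists_orliczFunction_forall_lt fun t => (m (t⁻¹ ^ (N⁻¹ : ℝ)))⁻¹
  have hψinv := hψ.orliczInverse_invFunOn
  obtain ⟨h₀, hh₀, H⟩ := hyp ψ _ hψ hψinv 2 two_pos
  obtain ⟨K, hK1, hK⟩ : ∃ K : ℕ, 1 ≤ K ∧ (h₀ ^ N)⁻¹ < ψ K :=
    ((eventually_ge_atTop 1).and
      ((hψ.tendsto_atTop.comp tendsto_natCast_atTop_atTop).eventually_gt_atTop _)).exists
  have hψK : 0 < ψ K := (inv_pos.2 (pow_pos hh₀.1 N)).trans hK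
  set h := (ψ K)⁻¹ ^ (N⁻¹ : ℝ)
  have hN0 : N ≠ 0 := by omega
  have hhN : h ^ N = (ψ K)⁻¹ := Real.rpow_inv_natCast_pow (inv_nonneg.2 hψK.le) hN0
  have h_pos : 0 < h := by positivity
  have h_lt : h < h₀ :=
    (pow_lt_pow_iff_left₀ h_pos.le hh₀.1.le hN0).1 (hhN ▸ inv_lt_of_inv_lt₀ (pow_pos hh₀.1 N) hK)
  have hmh := H h h_pos h_lt
  rw [hhN, one_div (ψ K)⁻¹, inv_inv, hψinv.1 K (Nat.cast_nonneg K), one_div] at hmh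
  have hgrow : (m h)⁻¹ < ψ (2 * K) := (hstep K).trans_le <| hψ.strictMonoOn.monotoneOn
    (mem_Ici.2 (by positivity)) (mem_Ici.2 (by positivity)) (by norm_cast; omega)
  exact (inv_lt_of_inv_lt₀ (hpos h ⟨h_pos, h_lt.trans hh₀.2⟩) hgrow).not_ge hmh
end

section
/- Let ψ be an Orlicz function. The following two conditions are equivalent: (i) for every B > 1 there exist C_B ≥ 1 and x₀ > 0 such that ψ(Bx)/ψ(x) ≤ ψ(C_B·B·y)/ψ(y) whenever x₀ ≤ x ≤ y; (ii) for every B > 1 and every n > 0 there exist C_n > 0 and x₀ > 0 such that (ψ(Bx)/ψ(x))^n ≤ ψ(C_n·y)/ψ(B·y) whenever x₀ ≤ x ≤ y. -/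
open Set Filter

/-!
Since `ψ(Bx)/ψ(x) ≥ 1`, the real power `n` may be replaced by the integer `m = ⌈n⌉`.
Iterating `(i)` along the chain `y ≤ (CB) y ≤ (CB)² y ≤ …` makes the quotients
`ψ((CB)^{k+1} y) / ψ((CB)^k y)` telescope, so `(ψ(Bx)/ψ(x))^m ≤ ψ(D y)/ψ(y)` with `D = (CB)^m`;
one more application of `(i)`, now with `D` in place of `B` and at the points `y ≤ By`, moves the
denominator to `ψ(By)`. Conversely `(ii)` with `n = 1` is `(i)` up to enlarging the constant, since
`ψ` is increasing.
-/

def PowerNabla0 (ψ : ℝ → ℝ) : Prop :=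
  ∀ B > (1:ℝ), ∀ n > (0:ℝ), ∃ C > (0:ℝ), ∃ x₀ > (0:ℝ), ∀ x y : ℝ, x₀ ≤ x → x ≤ y →
    (ψ (B * x) / ψ x) ^ n ≤ ψ (C * y) / ψ (B * y)

theorem pow_div_le_div_of_div_le_div {f : ℝ → ℝ} {a b x₀ x y : ℝ} (ha : 0 < a) (hb : 1 ≤ b)
    (hx₀ : 0 < x₀) (hf : ∀ t, 0 < t → 0 < f t)
    (H : ∀ x y, x₀ ≤ x → x ≤ y → f (a * x) / f x ≤ f (b * y) / f y)
    (k : ℕ) (hx : x₀ ≤ x) (hxy : x ≤ y) :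
    (f (a * x) / f x) ^ k ≤ f (b ^ k * y) / f y := by
  have hx0 : 0 < x := hx₀.trans_le hx
  have hy0 : 0 < y := hx0.trans_le hxy
  induction k with
  | zero => simp [(hf y hy0).ne']
  | succ k ih =>
    have hy_le : y ≤ b ^ k * y := le_mul_of_one_le_left hy0.le (one_le_pow₀ hb)
    have hbky := hf _ (hy0.trans_le hy_le)
    calc (f (a * x) / f x) ^ (k + 1)
        = (f (a * x) / f x) ^ k * (f (a * x) / f x) := pow_succ _ _
      _ ≤ f (b ^ k * y) / f y * (f (b * (b ^ k * y)) / f (b ^ k * y)) :=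
          mul_le_mul ih (H x _ hx (hxy.trans hy_le))
            (div_pos (hf _ (mul_pos ha hx0)) (hf x hx0)).le (div_pos hbky (hf y hy0)).le
      _ = f (b ^ (k + 1) * y) / f y := by
          rw [pow_succ', mul_assoc]
          field_simp

namespace OrliczFunction

variable {ψ : ℝ → ℝ}

theorem monotoneOn (hψ : OrliczFunction ψ) : MonotoneOn ψ (Ici 0) := by
  obtain ⟨hconv, hnn, h0, -, -⟩ := hψ
  intro a ha b hb hab
  rcases (mem_Ici.1 ha).eq_or_lt with rfl | ha0
  · rw [h0]; exact hnn b hb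
  · exact hconv.convexOn.le_right_of_left_le'' self_mem_Ici hb ha0 hab
      (by rw [h0]; exact hnn a ha)

theorem one_le_div_apply (hψ : OrliczFunction ψ) {B x : ℝ} (hB : 1 ≤ B) (hx : 0 < x) :
    1 ≤ ψ (B * x) / ψ x :=
  (one_le_div (hψ.pos hx)).2 <|
    hψ.monotoneOn (mem_Ici.2 hx.le) (mem_Ici.2 (by nlinarith)) (le_mul_of_one_le_left hx.le hB)

theorem powerNabla0_of_nabla0 (hψ : OrliczFunction ψ) (h : Nabla0 ψ) : PowerNabla0 ψ := by
  intro B hB n hn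
  obtain ⟨C, hC, x₀, hx₀, H⟩ := h B hB
  set m := ⌈n⌉₊
  have hD : 1 < (C * B) ^ m := one_lt_pow₀ (one_lt_mul hC hB) (Nat.ceil_pos.2 hn).ne'
  obtain ⟨C₂, hC₂, x₂, hx₂, H₂⟩ := h _ hD
  refine ⟨C₂ * (C * B) ^ m * B, by positivity, max x₀ x₂, lt_max_of_lt_left hx₀,
    fun x y hx hxy => ?_⟩
  have hx0 : 0 < x := hx₀.trans_le (le_of_max_le_left hx)
  have hy0 : 0 < y := hx0.trans_le hxy
  calc (ψ (B * x) / ψ x) ^ n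
      ≤ (ψ (B * x) / ψ x) ^ m := by
        rw [← Real.rpow_natCast]
        exact Real.rpow_le_rpow_of_exponent_le (hψ.one_le_div_apply hB.le hx0) (Nat.le_ceil n)
    _ ≤ ψ ((C * B) ^ m * y) / ψ y :=
        pow_div_le_div_of_div_le_div (by positivity) (one_le_mul_of_one_le_of_one_le hC hB.le)
          hx₀ (fun _ => hψ.pos) H m (le_of_max_le_left hx) hxy
    _ ≤ ψ (C₂ * (C * B) ^ m * (B * y)) / ψ (B * y) :=
        H₂ y (B * y) ((le_of_max_le_right hx).trans hxy) (le_mul_of_one_le_left hy0.le hB.le)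
    _ = ψ (C₂ * (C * B) ^ m * B * y) / ψ (B * y) := by rw [mul_assoc _ B y]

theorem nabla0_of_powerNabla0 (hψ : OrliczFunction ψ) (h : PowerNabla0 ψ) : Nabla0 ψ := by
  intro B hB
  obtain ⟨C, hC, x₀, hx₀, H⟩ := h B hB 1 one_pos
  have hB0 : 0 < B := one_pos.trans hB
  refine ⟨max 1 (C / B), le_max_left _ _, x₀, hx₀, fun x y hx hxy => ?_⟩
  have hy0 : 0 < y := hx₀.trans_le (hx.trans hxy)
  have hCy : C * y ≤ max 1 (C / B) * B * y :=
    mul_le_mul_of_nonneg_right ((div_le_iff₀ hB0).1 (le_max_right _ _)) hy0.le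
  calc ψ (B * x) / ψ x
      ≤ ψ (C * y) / ψ (B * y) := by simpa using H x y hx hxy
    _ ≤ ψ (max 1 (C / B) * B * y) / ψ y :=
        div_le_div₀ (hψ.2.1 _ (mem_Ici.2 (by positivity)))
          (hψ.monotoneOn (mem_Ici.2 (by positivity)) (mem_Ici.2 (by positivity)) hCy)
          (hψ.pos hy0) (hψ.monotoneOn (mem_Ici.2 hy0.le) (mem_Ici.2 (by positivity))
            (le_mul_of_one_le_left hy0.le hB.le))

end OrliczFunction

/-- equivalence of the two forms of the nabla_0-condition. -/
theorem stmt5 (ψ : ℝ → ℝ) (hψ : OrliczFunction ψ) :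
    (∀ B > (1:ℝ), ∃ C ≥ (1:ℝ), ∃ x₀ > (0:ℝ), ∀ x y : ℝ, x₀ ≤ x → x ≤ y →
        ψ (B * x) / ψ x ≤ ψ (C * B * y) / ψ y) ↔
    (∀ B > (1:ℝ), ∀ n > (0:ℝ), ∃ C > (0:ℝ), ∃ x₀ > (0:ℝ), ∀ x y : ℝ, x₀ ≤ x → x ≤ y →
        (ψ (B * x) / ψ x) ^ n ≤ ψ (C * y) / ψ (B * y)) :=
  ⟨hψ.powerNabla0_of_nabla0, hψ.nabla0_of_powerNabla0⟩
end

section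
/- If an Orlicz function ψ satisfies the Δ²-condition, then ψ satisfies the uniform ∇₀-condition. -/
/-!
Eventually `ψ ≥ 1`, so for `x₀ ≤ x ≤ y` and `B > 1` monotonicity and the Δ²-condition give
`ψ(Bx)/ψ(x) ≤ ψ(Bx) ≤ ψ(By) ≤ ψ(By)²/ψ(y) ≤ ψ(CBy)/ψ(y)`,
where the middle step uses `ψ(y) ≤ ψ(By)`. The constant `C` does not depend on `B`.
-/

open Set Filter

theorem ConvexOn.monotoneOn_Ici {f : ℝ → ℝ} {a : ℝ} (hf : ConvexOn ℝ (Ici a) f)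
    (hmin : ∀ x ∈ Ici a, f a ≤ f x) : MonotoneOn f (Ici a) := by
  intro s hs t ht hst
  rcases (mem_Ici.1 hs).eq_or_lt with rfl | has
  · exact hmin t ht
  · exact hf.le_right_of_left_le'' self_mem_Ici ht has hst (hmin s hs)

theorem DeltaSquare.exists_one_le {ψ : ℝ → ℝ} (hmono : MonotoneOn ψ (Ici 0)) (h : DeltaSquare ψ) :
    ∃ C ≥ (1:ℝ), ∃ x₀ > (0:ℝ), ∀ x ≥ x₀, ψ x ^ 2 ≤ ψ (C * x) := by
  obtain ⟨C, hC, x₀, hx₀, hΔ⟩ := h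
  refine ⟨max C 1, le_max_right _ _, x₀, hx₀, fun x hx => (hΔ x hx).trans ?_⟩
  have hx : 0 ≤ x := hx₀.le.trans hx
  exact hmono (mem_Ici.2 (by positivity)) (mem_Ici.2 (by positivity))
    (mul_le_mul_of_nonneg_right (le_max_left _ _) hx)

/-- the Delta^2-condition implies the uniform nabla_0-condition. -/
theorem stmt7 (ψ : ℝ → ℝ) (hψ : OrliczFunction ψ) (h : DeltaSquare ψ) : UniformNabla0 ψ := by
  obtain ⟨C, hC, x₁, hx₁, hΔ⟩ := h.exists_one_le hψ.monotoneOn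
  obtain ⟨x₂, hx₂⟩ := (hψ.tendsto_atTop.eventually_ge_atTop 1).exists_forall_of_atTop
  refine ⟨C, hC, fun B hB => ⟨max x₁ (max x₂ 1), by positivity, fun x y hx hxy => ?_⟩⟩
  simp only [max_le_iff] at hx
  obtain ⟨hx₁x, hx₂x, hx1⟩ := hx
  have hy : 0 ≤ y := by linarith
  have hyBy : y ≤ B * y := le_mul_of_one_le_left hy hB.le
  have hψx : 1 ≤ ψ x := hx₂ x hx₂x
  have hψy : 1 ≤ ψ y := hx₂ y (hx₂x.trans hxy)
  have hBx : 0 ≤ B * x := by positivity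
  have hψBy : ψ y ≤ ψ (B * y) := hψ.monotoneOn (mem_Ici.2 hy) (mem_Ici.2 (hy.trans hyBy)) hyBy
  calc ψ (B * x) / ψ x ≤ ψ (B * x) := div_le_self (hψ.2.1 _ (mem_Ici.2 hBx)) hψx
    _ ≤ ψ (B * y) :=
        hψ.monotoneOn (mem_Ici.2 hBx) (mem_Ici.2 (hy.trans hyBy)) (by gcongr)
    _ ≤ ψ (B * y) ^ 2 / ψ y := by
        rw [le_div_iff₀ (by linarith), sq]
        exact mul_le_mul_of_nonneg_left hψBy (by linarith)
    _ ≤ ψ (C * (B * y)) / ψ y := by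
        gcongr
        exact hΔ _ (by linarith)
    _ = ψ (C * B * y) / ψ y := by rw [mul_assoc]
end

section
/- Let ψ be an Orlicz function satisfying the ∇₀-condition, let N(α) > N(β) > 0 and set n = N(β)/(N(α) − N(β)). Then for every B > 1 there exist A > 0 and x₀ > 0 such that ψ(Bx)^{N(α)} ≤ ψ(Ax)^{N(α)−N(β)} · ψ(x)^{N(β)} for every x ≥ x₀. -/
/-!
Apply the ∇₀-condition to `B`, obtaining `C`, and put `r = ψ(Bx)/ψ(x) ≥ 1`. Chaining the
condition along the points `(CB)ʲ Bx` and telescoping gives `rᵏ ≤ ψ((CB)ᵏ Bx)/ψ(Bx)` for every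
`k`; with `k = ⌈n⌉` and `A = (CB)ᵏ B` this yields `rⁿ ≤ ψ(Ax)/ψ(Bx)`, and raising to the power
`N(α) − N(β)` (so that `n (N(α) − N(β)) = N(β)`) is the claimed inequality.
-/

open Set Filter

namespace OrliczFunction

variable {ψ : ℝ → ℝ}

theorem strictMonoOn_Ioi (hψ : OrliczFunction ψ) : StrictMonoOn ψ (Ioi 0) := by
  intro x hx y hy hxy
  obtain ⟨hconv, hnonneg, hzero, -, -⟩ := hψ
  have hx_mem : x ∈ openSegment ℝ 0 y := by
    rw [openSegment_eq_Ioo (mem_Ioi.mp hy)]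
    exact ⟨hx, hxy⟩
  calc ψ x < max (ψ 0) (ψ y) :=
        hconv.lt_on_openSegment self_mem_Ici (mem_Ici.mpr hy.le) hy.ne hx_mem
    _ = ψ y := by rw [hzero, max_eq_right (hnonneg y (mem_Ici.mpr hy.le))]

end OrliczFunction

/-- With `yⱼ = Dʲ B x`, each factor `f (B x) / f x` is at most `f (yⱼ₊₁) / f (yⱼ)`, and the
product of these telescopes. -/
theorem div_pow_le_div_of_div_le_div {f : ℝ → ℝ} {B D x₀ x : ℝ} (hf : ∀ x, 0 < x → 0 < f x)
    (hB : 1 ≤ B) (hD : 1 ≤ D) (hx₀ : 0 < x₀)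
    (h : ∀ x y, x₀ ≤ x → x ≤ y → f (B * x) / f x ≤ f (D * y) / f y) (hx : x₀ ≤ x) (k : ℕ) :
    (f (B * x) / f x) ^ k ≤ f (D ^ k * B * x) / f (B * x) := by
  have hx_pos : 0 < x := hx₀.trans_le hx
  induction k with
  | zero => rw [pow_zero, pow_zero, one_mul, div_self (hf _ (by positivity)).ne']
  | succ k ih =>
    have hy_pos : 0 < D ^ k * B * x := by positivity
    have hxy : x ≤ D ^ k * B * x :=
      le_mul_of_one_le_left hx_pos.le (one_le_mul_of_one_le_of_one_le (one_le_pow₀ hD) hB)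
    calc (f (B * x) / f x) ^ (k + 1) = (f (B * x) / f x) ^ k * (f (B * x) / f x) := pow_succ _ _
      _ ≤ f (D ^ k * B * x) / f (B * x) * (f (D * (D ^ k * B * x)) / f (D ^ k * B * x)) :=
          mul_le_mul ih (h x _ hx hxy) (div_nonneg (hf _ (by positivity)).le (hf x hx_pos).le)
            (div_nonneg (hf _ hy_pos).le (hf _ (by positivity)).le)
      _ = f (D ^ (k + 1) * B * x) / f (B * x) := by
          rw [div_mul_div_comm, mul_comm (f (D ^ k * B * x)), mul_div_mul_right _ _
            (hf _ hy_pos).ne', pow_succ, mul_comm (D ^ k) D, mul_assoc D, mul_assoc D]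

theorem rpow_le_rpow_mul_rpow_of_div_rpow_le {p q s b c : ℝ} (hp : 0 < p) (hq : 0 < q)
    (hs : 0 ≤ s) (hbc : b < c) (h : (q / p) ^ (b / (c - b)) ≤ s / q) :
    q ^ c ≤ s ^ (c - b) * p ^ b := by
  have hcb : 0 < c - b := sub_pos.mpr hbc
  have key : q ^ b / p ^ b ≤ s ^ (c - b) / q ^ (c - b) := by
    have := Real.rpow_le_rpow (Real.rpow_nonneg (div_nonneg hq.le hp.le) _) h hcb.le
    rwa [← Real.rpow_mul (div_nonneg hq.le hp.le), div_mul_cancel₀ _ hcb.ne',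
      Real.div_rpow hq.le hp.le, Real.div_rpow hs hq.le] at this
  rw [div_le_div_iff₀ (Real.rpow_pos_of_pos hp _) (Real.rpow_pos_of_pos hq _)] at key
  calc q ^ c = q ^ b * q ^ (c - b) := by rw [← Real.rpow_add hq, add_sub_cancel]
    _ ≤ s ^ (c - b) * p ^ b := key

theorem stmt13_general (ψ : ℝ → ℝ) (hψ : OrliczFunction ψ) (hnabla : Nabla0 ψ)
    (Nα Nβ : ℝ) (hNβα : Nβ < Nα) (n : ℝ) (hdef : n = Nβ / (Nα - Nβ)) :
    ∀ B > (1:ℝ), ∃ A > (0:ℝ), ∃ x₀ > (0:ℝ), ∀ x ≥ x₀,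
      ψ (B * x) ^ Nα ≤ ψ (A * x) ^ (Nα - Nβ) * ψ x ^ Nβ := by
  intro B hB
  obtain ⟨C, hC, x₀, hx₀, hψC⟩ := hnabla B hB
  have hCB : 1 ≤ C * B := one_le_mul_of_one_le_of_one_le hC hB.le
  refine ⟨(C * B) ^ ⌈n⌉₊ * B, by positivity, x₀, hx₀, fun x hx => ?_⟩
  have hx_pos : 0 < x := hx₀.trans_le hx
  have hBx : 0 < B * x := by positivity
  have hratio : 1 ≤ ψ (B * x) / ψ x := (one_le_div (hψ.pos hx_pos)).mpr
    (hψ.strictMonoOn_Ioi hx_pos hBx (lt_mul_of_one_lt_left hx_pos hB)).le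
  refine rpow_le_rpow_mul_rpow_of_div_rpow_le (hψ.pos hx_pos) (hψ.pos hBx)
    (hψ.pos (by positivity)).le hNβα ?_
  rw [← hdef]
  calc (ψ (B * x) / ψ x) ^ n ≤ (ψ (B * x) / ψ x) ^ (⌈n⌉₊ : ℝ) :=
        Real.rpow_le_rpow_of_exponent_le hratio (Nat.le_ceil n)
    _ = (ψ (B * x) / ψ x) ^ ⌈n⌉₊ := Real.rpow_natCast _ _
    _ ≤ ψ ((C * B) ^ ⌈n⌉₊ * B * x) / ψ (B * x) :=
        div_pow_le_div_of_div_le_div (fun _ => hψ.pos) hB.le hCB hx₀ hψC hx ⌈n⌉₊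

/-- if `ψ` is an Orlicz function satisfying the nabla_0-condition and
`N(α) > N(β) > 0`, with `n = N(β)/(N(α)−N(β))`, then for every `B > 1` there are `A > 0`
and `x₀ > 0` such that `ψ(Bx)^{N(α)} ≤ ψ(Ax)^{N(α)−N(β)} · ψ(x)^{N(β)}` for all `x ≥ x₀`. -/
theorem stmt13 (ψ : ℝ → ℝ) (hψ : OrliczFunction ψ) (hnabla : Nabla0 ψ)
    (Nα Nβ : ℝ) (hNβ : 0 < Nβ) (hNβα : Nβ < Nα) (n : ℝ) (hdef : n = Nβ / (Nα - Nβ)) :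
    ∀ B > (1:ℝ), ∃ A > (0:ℝ), ∃ x₀ > (0:ℝ), ∀ x ≥ x₀,
      ψ (B * x) ^ Nα ≤ ψ (A * x) ^ (Nα - Nβ) * ψ x ^ Nβ :=
  stmt13_general ψ hψ hnabla Nα Nβ hNβα n hdef
end

section
/- If ψ is an Orlicz function satisfying the Δ²-condition, then for every a > 1 there exist C > 0 and x₀ > 0 such that ψ⁻¹(x^a) ≤ C·ψ⁻¹(x) for every x ≥ x₀. -/
open Set Filter

/-! `ψ⁻¹` is monotone and `ψ⁻¹(y²) ≤ C ψ⁻¹(y)` for large `y`: if `u = ψ⁻¹(y)`, the Δ²-condition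
gives `y² = ψ(u)² ≤ ψ(Cu)`. Iterating, `ψ⁻¹(y^(2^n)) ≤ Cⁿ ψ⁻¹(y)`, and `y^a ≤ y^(2^n)` once
`2^n ≥ a`. -/

section StrictConvex

variable {𝕜 : Type*} [Field 𝕜] [LinearOrder 𝕜] [IsStrictOrderedRing 𝕜] {f : 𝕜 → 𝕜} {a : 𝕜}

/-- Every secant starting at the minimum `a` has nonnegative slope, and strict convexity makes
the next secant strictly steeper. -/
theorem StrictConvexOn.strictMonoOn_Ici_of_isMinOn (hf : StrictConvexOn 𝕜 (Ici a) f)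
    (hmin : IsMinOn f (Ici a) a) : StrictMonoOn f (Ici a) := by
  have lt_of_gt_left : ∀ ⦃u v⦄, a < u → u < v → f u < f v := fun u v hau huv => by
    have hslope := hf.slope_strict_mono_adjacent self_mem_Ici (mem_Ici.2 (hau.trans huv).le)
      hau huv
    have hfu : f a ≤ f u := hmin (mem_Ici.2 hau.le)
    have hpos : 0 < (f v - f u) / (v - u) :=
      lt_of_le_of_lt (div_nonneg (sub_nonneg.2 hfu) (sub_pos.2 hau).le) hslope
    exact sub_pos.1 ((div_pos_iff_of_pos_right (sub_pos.2 huv)).1 hpos)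
  intro u hu v _ huv
  rcases (mem_Ici.1 hu).eq_or_lt with rfl | hau
  · have hmid : a < (a + v) / 2 := by linarith
    exact (hmin (mem_Ici.2 hmid.le)).trans_lt (lt_of_gt_left hmid (by linarith))
  · exact lt_of_gt_left hau huv

end StrictConvex

theorem OrliczFunction.strictMonoOn_s14 {ψ : ℝ → ℝ} (hψ : OrliczFunction ψ) :
    StrictMonoOn ψ (Ici 0) := by
  obtain ⟨hconv, hnn, h0, -⟩ := hψ
  exact hconv.strictMonoOn_Ici_of_isMinOn fun x hx => by simpa [h0] using hnn x hx

namespace OrliczInverse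

variable {ψ ψinv : ℝ → ℝ}

theorem le_apply_iff (hinv : OrliczInverse ψ ψinv) (hψ : StrictMonoOn ψ (Ici 0)) {x y : ℝ}
    (hx : 0 ≤ x) (hy : 0 ≤ y) : x ≤ ψinv y ↔ ψ x ≤ y := by
  conv_rhs => rw [← hinv.2.1 y hy]
  exact (hψ.le_iff_le hx (hinv.2.2 y hy)).symm

theorem monotoneOn (hinv : OrliczInverse ψ ψinv) (hψ : StrictMonoOn ψ (Ici 0)) :
    MonotoneOn ψinv (Ici 0) := fun y hy z hz hyz =>
  (hinv.le_apply_iff hψ (hinv.2.2 y hy) hz).2 (by rwa [hinv.2.1 y hy])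

theorem exists_apply_sq_le_mul (hinv : OrliczInverse ψ ψinv) (hψ : StrictMonoOn ψ (Ici 0))
    (hΔ : DeltaSquare ψ) :
    ∃ C > (0:ℝ), ∃ y₀ ≥ (1:ℝ), ∀ y ≥ y₀, ψinv (y ^ 2) ≤ C * ψinv y := by
  obtain ⟨C, hC, x₀, hx₀, hsq⟩ := hΔ
  refine ⟨C, hC, max (ψ x₀) 1, le_max_right _ _, fun y hy => ?_⟩
  have hy0 : 0 ≤ y := by linarith [le_max_right (ψ x₀) 1]
  set u := ψinv y
  have hu0 : 0 ≤ u := hinv.2.2 y hy0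
  have hx₀u : x₀ ≤ u := (hinv.le_apply_iff hψ hx₀.le hy0).2 ((le_max_left _ _).trans hy)
  have hyu : y ^ 2 ≤ ψ (C * u) := by simpa only [u, hinv.2.1 y hy0] using hsq u hx₀u
  calc ψinv (y ^ 2) ≤ ψinv (ψ (C * u)) :=
        hinv.monotoneOn hψ (sq_nonneg y) ((sq_nonneg y).trans hyu) hyu
    _ = C * u := hinv.1 _ (mul_nonneg hC.le hu0)

end OrliczInverse

section IterateSquare

variable {g : ℝ → ℝ} {C y₀ : ℝ}

theorem apply_pow_two_pow_le_of_apply_sq_le (hC : 0 ≤ C) (hy₀ : 1 ≤ y₀)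
    (h : ∀ y ≥ y₀, g (y ^ 2) ≤ C * g y) (n : ℕ) :
    ∀ y ≥ y₀, g (y ^ 2 ^ n) ≤ C ^ n * g y := by
  induction n with
  | zero => simp
  | succ n ih =>
    intro y hy
    have hpow : y₀ ≤ y ^ 2 ^ n := hy.trans (le_self_pow₀ (hy₀.trans hy) (by positivity))
    calc g (y ^ 2 ^ (n + 1)) = g ((y ^ 2 ^ n) ^ 2) := by rw [pow_succ, pow_mul]
      _ ≤ C * g (y ^ 2 ^ n) := h _ hpow
      _ ≤ C * (C ^ n * g y) := mul_le_mul_of_nonneg_left (ih y hy) hC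
      _ = C ^ (n + 1) * g y := by ring

theorem MonotoneOn.exists_apply_rpow_le_mul (hg : MonotoneOn g (Ici 0)) (hC : 0 < C)
    (hy₀ : 1 ≤ y₀) (h : ∀ y ≥ y₀, g (y ^ 2) ≤ C * g y) (a : ℝ) :
    ∃ K > (0:ℝ), ∀ y ≥ y₀, g (y ^ a) ≤ K * g y := by
  obtain ⟨n, hn⟩ := pow_unbounded_of_one_lt a one_lt_two
  refine ⟨C ^ n, pow_pos hC n, fun y hy => ?_⟩
  have hy1 : 1 ≤ y := hy₀.trans hy
  have hrpow : y ^ a ≤ y ^ 2 ^ n := by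
    have := Real.rpow_le_rpow_of_exponent_le hy1 hn.le
    rwa [← Real.rpow_natCast, Nat.cast_pow, Nat.cast_ofNat]
  calc g (y ^ a) ≤ g (y ^ 2 ^ n) :=
        hg (Real.rpow_nonneg (by linarith) a) (mem_Ici.2 (by positivity)) hrpow
    _ ≤ C ^ n * g y := apply_pow_two_pow_le_of_apply_sq_le hC.le hy₀ h n y hy

end IterateSquare

/-- if `ψ` is an Orlicz function satisfying the Delta^2-condition, then for
every `a > 1` there are `C > 0` and `x₀ > 0` with `ψ⁻¹(x^a) ≤ C · ψ⁻¹(x)` for `x ≥ x₀`. -/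
theorem stmt14 (ψ ψinv : ℝ → ℝ) (hψ : OrliczFunction ψ) (hinv : OrliczInverse ψ ψinv)
    (hΔ : DeltaSquare ψ) :
    ∀ a > (1:ℝ), ∃ C > (0:ℝ), ∃ x₀ > (0:ℝ), ∀ x ≥ x₀, ψinv (x ^ a) ≤ C * ψinv x := by
  intro a _
  have hmono := hψ.strictMonoOn_s14
  obtain ⟨C, hC, y₀, hy₀, hstep⟩ := hinv.exists_apply_sq_le_mul hmono hΔ
  obtain ⟨K, hK, hK_le⟩ := (hinv.monotoneOn hmono).exists_apply_rpow_le_mul hC hy₀ hstep a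
  exact ⟨K, hK, y₀, by linarith, hK_le⟩
end
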